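/- Let L be a balanced weighted Laplacian, Z a nonnegative matrix, and x* ∈ ℝ^m_+. Along the dynamics ẋ = -Z L(x*) Exp(Zᵀ Ln(x/x*)), the Lyapunov function G(x) = xᵀLn(x/x*) + (x*-x)ᵀ𝟙 satisfies Ġ(x) = (∂G/∂x)(x)·ẋ ≤ 0 for all x ∈ ℝ^m_+. Concretely: for all x ∈ ℝ^m_+, Ln(x/x*)ᵀ Zᵀ L(x*) Exp(Zᵀ Ln(x/x*)) ≥ 0. -/
import Mathlib


open Matrix Finset

lemma key_pair (a b : ℝ) :
    (a - 1) * Real.exp a + (1 - b) * Real.exp b ≤ a * (Real.exp a - Real.exp b) := by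
  have h := Real.add_one_le_exp (a - b)
  have h2 : (a - b + 1) * Real.exp b ≤ Real.exp (a - b) * Real.exp b := by
    apply mul_le_mul_of_nonneg_right h (Real.exp_nonneg b)
  rw [← Real.exp_add] at h2
  have : a - b + b = a := by ring
  rw [this] at h2
  nlinarith [h2]

lemma laplacian_exp_nonneg (c : ℕ) (L : Matrix (Fin c) (Fin c) ℝ)
    (hoff : ∀ i j, i ≠ j → L i j ≤ 0)
    (hcol : ∀ j, ∑ i, L i j = 0)
    (hrow : ∀ i, ∑ j, L i j = 0)
    (γ : Fin c → ℝ) :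
    0 ≤ γ ⬝ᵥ L.mulVec (fun k => Real.exp (γ k)) := by
  have expand : γ ⬝ᵥ L.mulVec (fun k => Real.exp (γ k))
      = ∑ j, ∑ k, (-L j k) * (γ j * (Real.exp (γ j) - Real.exp (γ k))) := by
    simp only [dotProduct, Matrix.mulVec, Finset.mul_sum]
    rw [← sub_zero (∑ j, ∑ k, γ j * (L j k * Real.exp (γ k)))]
    have h0 : ∑ j, γ j * Real.exp (γ j) * (∑ k, L j k) = 0 := by
      simp [hrow]
    rw [← h0, ← Finset.sum_sub_distrib]
    apply Finset.sum_congr rfl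
    intro j _
    rw [Finset.mul_sum, ← Finset.sum_sub_distrib]
    apply Finset.sum_congr rfl
    intro k _
    ring
  rw [expand]
  have bound : ∀ j k, (-L j k) * ((γ j - 1) * Real.exp (γ j) + (1 - γ k) * Real.exp (γ k))
      ≤ (-L j k) * (γ j * (Real.exp (γ j) - Real.exp (γ k))) := by
    intro j k
    by_cases h : j = k
    · subst h
      have : (γ j - 1) * Real.exp (γ j) + (1 - γ j) * Real.exp (γ j) = 0 := by ring
      simp [this]
    · exact mul_le_mul_of_nonneg_left (key_pair (γ j) (γ k)) (by linarith [hoff j k h])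
  have lower : (0:ℝ) = ∑ j, ∑ k, (-L j k) * ((γ j - 1) * Real.exp (γ j) + (1 - γ k) * Real.exp (γ k)) := by
    have split : ∑ j, ∑ k, (-L j k) * ((γ j - 1) * Real.exp (γ j) + (1 - γ k) * Real.exp (γ k))
        = (∑ j, ∑ k, (-L j k) * ((γ j - 1) * Real.exp (γ j)))
          + ∑ j, ∑ k, (-L j k) * ((1 - γ k) * Real.exp (γ k)) := by
      rw [← Finset.sum_add_distrib]
      apply Finset.sum_congr rfl
      intro j _
      rw [← Finset.sum_add_distrib]
      apply Finset.sum_congr rfl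
      intro k _
      ring
    have t1 : ∑ j, ∑ k, (-L j k) * ((γ j - 1) * Real.exp (γ j)) = 0 := by
      apply Finset.sum_eq_zero
      intro j _
      rw [← Finset.sum_mul]
      have : ∑ k, -L j k = 0 := by rw [Finset.sum_neg_distrib, hrow j, neg_zero]
      rw [this, zero_mul]
    have t2 : ∑ j, ∑ k, (-L j k) * ((1 - γ k) * Real.exp (γ k)) = 0 := by
      rw [Finset.sum_comm]
      apply Finset.sum_eq_zero
      intro k _
      rw [← Finset.sum_mul]
      have : ∑ j, -L j k = 0 := by rw [Finset.sum_neg_distrib, hcol k, neg_zero]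
      rw [this, zero_mul]
    rw [split, t1, t2, add_zero]
  rw [lower]
  apply Finset.sum_le_sum
  intro j _
  apply Finset.sum_le_sum
  intro k _
  exact bound j k

theorem lyapunov_derivative_nonpos (m c : ℕ)
    (Z : Matrix (Fin m) (Fin c) ℝ) (L : Matrix (Fin c) (Fin c) ℝ)
    (hZ : ∀ i j, 0 ≤ Z i j)
    (hoff : ∀ i j, i ≠ j → L i j ≤ 0)
    (hcol : ∀ j, ∑ i, L i j = 0)
    (hrow : ∀ i, ∑ j, L i j = 0)
    (xs : Fin m → ℝ) (hxs : ∀ i, 0 < xs i)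
    (x : Fin m → ℝ) (hx : ∀ i, 0 < x i) :
    0 ≤ (fun i => Real.log (x i / xs i)) ⬝ᵥ
      Z.mulVec (L.mulVec (fun j =>
        Real.exp (Zᵀ.mulVec (fun i => Real.log (x i / xs i)) j))) := by
  set v : Fin m → ℝ := fun i => Real.log (x i / xs i) with hv
  set γ : Fin c → ℝ := Zᵀ.mulVec v with hγ
  have rewr : v ⬝ᵥ Z.mulVec (L.mulVec (fun j => Real.exp (γ j)))
      = γ ⬝ᵥ L.mulVec (fun k => Real.exp (γ k)) := by
    rw [Matrix.dotProduct_mulVec, ← Matrix.mulVec_transpose]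
  calc (0:ℝ) ≤ γ ⬝ᵥ L.mulVec (fun k => Real.exp (γ k)) :=
        laplacian_exp_nonneg c L hoff hcol hrow γ
    _ = _ := by rw [← rewr]
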